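/- arXiv:1708.04778 — 3 statements merged into one kernel-verified Lean document; each statement's English description precedes it below -/
import Mathlib

section
/- Fix any rate R > (1/2)·log(σ²/D). If α_sp ∈ [σ², r₂²) satisfies R_sp(α_sp) = R and α_iid ≥ σ² satisfies R_iid(s*(α_iid), α_iid) = R, then α_sp < α_iid. (Consequently, since Λ*_{X²} is increasing on [σ²,∞), the i.i.d. Gaussian codebook has a strictly larger ensemble excess-distortion exponent than the spherical codebook at rate R.) -/
noncomputable section

/-- `R_sp(z) = -(1/2) log(1 - (z + σ² - 2D)²/(4 z (σ² - D)))`. -/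
def Rsp (σ2 D z : ℝ) : ℝ :=
  -(1 / 2) * Real.log (1 - (z + σ2 - 2 * D) ^ 2 / (4 * z * (σ2 - D)))

/-- `R_iid(s, z) = (1/2) log(1+2s) + s z/((1+2s)(σ²-D)) - s D/(σ²-D)`. -/
def Riid (σ2 D s z : ℝ) : ℝ :=
  (1 / 2) * Real.log (1 + 2 * s) + s * z / ((1 + 2 * s) * (σ2 - D)) - s * D / (σ2 - D)

/-- `s*(z) = max{0, (σ² - 3D + √((σ²-D)² + 4 z D))/(4D)}`. -/
def sStar (σ2 D z : ℝ) : ℝ :=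
  max 0 ((σ2 - 3 * D + Real.sqrt ((σ2 - D) ^ 2 + 4 * z * D)) / (4 * D))

set_option maxHeartbeats 1600000 in
lemma key_ineq (σ2 D : ℝ) (hD : 0 < D) (hDσ : D < σ2)
    (s : ℝ) (hs : 0 ≤ s) (z : ℝ) (hz1 : σ2 < z)
    (hz2 : z < (Real.sqrt (σ2 - D) + Real.sqrt D) ^ 2) :
    Riid σ2 D s z < Rsp σ2 D z := by
  have hE : 0 < σ2 - D := sub_pos.2 hDσ
  have hz0 : 0 < z := hD.trans (hDσ.trans hz1)
  have ht0 : (0:ℝ) < 1 + 2*s := by linarith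
  have hsq : (Real.sqrt (σ2 - D) + Real.sqrt D)^2
      = σ2 + 2 * Real.sqrt (D * (σ2 - D)) := by
    have hm : Real.sqrt (σ2 - D) * Real.sqrt D = Real.sqrt (D * (σ2 - D)) := by
      rw [← Real.sqrt_mul hE.le, mul_comm]
    rw [add_sq, Real.sq_sqrt hE.le, Real.sq_sqrt hD.le, mul_assoc, hm]
    ring
  have hz2' : z < σ2 + 2 * Real.sqrt (D * (σ2 - D)) := hsq ▸ hz2
  have hw : (Real.sqrt (D * (σ2 - D)))^2 = D * (σ2-D) :=
    Real.sq_sqrt (by positivity)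
  have hN : 0 < 4*D*(σ2-D) - (z - σ2)^2 := by
    nlinarith [Real.sqrt_nonneg (D*(σ2-D))]
  set N := 4*D*(σ2-D) - (z - σ2)^2 with hNdef
  have harg : 1 - (z + σ2 - 2*D)^2 / (4*z*(σ2-D)) = N / (4*z*(σ2-D)) := by
    rw [hNdef]; field_simp; ring
  have hx0 : 0 < (1+2*s) * N / (4*z*(σ2-D)) := by positivity
  set x := (1+2*s) * N / (4*z*(σ2-D)) with hxdef
  have hlogx : Real.log (N / (4*z*(σ2-D))) = Real.log x - Real.log (1+2*s) := by
    have h2 : Real.log x = Real.log (1+2*s) + Real.log (N/(4*z*(σ2-D))) := by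
      rw [hxdef, mul_div_assoc, Real.log_mul ht0.ne' (by positivity)]
    linarith
  set a := N/(4*z) - D with hadef
  have ha : a < 0 := by
    rw [hadef]
    have : N/(4*z) < D := (div_lt_iff₀ (by positivity)).2 (by nlinarith)
    linarith
  have h4az : 4*a*z = N - 4*D*z := by rw [hadef]; field_simp
  have hdisc : (z + 2*D - σ2)^2 + 4*a*z = 0 := by
    rw [h4az, hNdef]; ring
  set q := a*(1+2*s)^2 + (z + 2*D - σ2)*(1+2*s) - z with hqdef
  have haq : a*q = (a*(1+2*s) + (z+2*D-σ2)/2)^2 := by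
    rw [hqdef]; linear_combination (-(1/4:ℝ)) * hdisc
  clear_value N x a q
  have hq : q ≤ 0 := by
    by_contra hq'
    push_neg at hq'
    have h1 : a*q < 0 := mul_neg_of_neg_of_pos ha hq'
    linarith [haq, sq_nonneg (a*(1+2*s) + (z+2*D-σ2)/2)]
  have hP : 0 < (1+2*s)*(σ2-D) := mul_pos ht0 hE
  have hKey : (x - 1 + 2*s*z/((1+2*s)*(σ2-D)) - 2*s*D/(σ2-D)) * ((1+2*s)*(σ2-D)) = q := by
    rw [hxdef, hqdef, hadef]; field_simp [ht0.ne', hz0.ne', hE.ne']; ring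
  have h2A : 2*s*z/((1+2*s)*(σ2-D)) = 2*(s*z/((1+2*s)*(σ2-D))) := by ring
  have h2B : 2*s*D/(σ2-D) = 2*(s*D/(σ2-D)) := by ring
  have hfin : Real.log x < 2*(s*D/(σ2-D)) - 2*(s*z/((1+2*s)*(σ2-D))) := by
    rcases eq_or_ne x 1 with hx1 | hx1
    · have hxN : (1+2*s)*N = 4*z*(σ2-D) := by
        rw [hxdef] at hx1; field_simp at hx1; linarith
      have hq1 : 4*z*q = 4*z*((2*s)*(z - D*(1+2*s))) := by
        rw [hqdef]
        linear_combination (1+2*s)^2 * h4az + (1+2*s) * hxN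
      have hq2 : q = (2*s)*(z - D*(1+2*s)) :=
        mul_left_cancel₀ (by positivity : (4*z : ℝ) ≠ 0) hq1
      have hqlt : q < 0 := by
        rcases lt_or_eq_of_le hq with h | h
        · exact h
        · exfalso
          rw [hq2] at h
          rcases mul_eq_zero.1 h with h0 | h0
          · have hs0 : s = 0 := by linarith
            rw [hs0] at hxN
            norm_num at hxN
            nlinarith [hNdef, hxN, mul_pos hE (show (0:ℝ) < z - D by linarith),
              sq_nonneg (z - σ2)]
          · have hzN : z * N = 4*D*z*(σ2-D) := by
              linear_combination D*hxN + N*h0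
            have hNval : N = 4*D*(σ2-D) :=
              mul_left_cancel₀ hz0.ne' (by linarith [hzN] : z * N = z * (4*D*(σ2-D)))
            rw [hNdef] at hNval
            nlinarith [mul_pos (sub_pos.2 hz1) (sub_pos.2 hz1)]
      have hK : x - 1 + 2*s*z/((1+2*s)*(σ2-D)) - 2*s*D/(σ2-D) < 0 := by
        by_contra hc
        push_neg at hc
        have h2 := mul_nonneg hc hP.le
        rw [hKey] at h2
        linarith
      rw [hx1] at hK
      rw [hx1, Real.log_one]
      linarith [hK, h2A, h2B]
    · have hlt : Real.log x < x - 1 := Real.log_lt_sub_one_of_pos hx0 hx1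
      have hKle : x - 1 + 2*s*z/((1+2*s)*(σ2-D)) - 2*s*D/(σ2-D) ≤ 0 := by
        by_contra hc
        push_neg at hc
        have h2 := mul_pos hc hP
        rw [hKey] at h2
        linarith
      linarith [hKle, h2A, h2B]
  simp only [Riid, Rsp]
  rw [harg, hlogx]
  linarith

set_option maxHeartbeats 800000 in
/-- **Comparison of the exponent parameters (Lemma 4 of the paper).** For any rate
`R > (1/2) log(σ²/D)`, if `α_sp ∈ [σ², r₂²)` satisfies `R_sp(α_sp) = R` and `α_iid ≥ σ²`
satisfies `R_iid(s*(α_iid), α_iid) = R`, then `α_sp < α_iid`. -/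
theorem alpha_sp_lt_alpha_iid (σ2 D : ℝ) (hD : 0 < D) (hDσ : D < σ2)
    (R : ℝ) (hR : (1 / 2) * Real.log (σ2 / D) < R)
    (αsp αiid : ℝ)
    (hαsp : αsp ∈ Set.Ico σ2 ((Real.sqrt (σ2 - D) + Real.sqrt D) ^ 2))
    (hRsp : Rsp σ2 D αsp = R)
    (hαiid : σ2 ≤ αiid)
    (hRiid : Riid σ2 D (sStar σ2 D αiid) αiid = R) :
    αsp < αiid := by
  obtain ⟨hαsp1, hαsp2⟩ := hαsp
  have hE : 0 < σ2 - D := sub_pos.2 hDσ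
  have hσ0 : 0 < σ2 := hD.trans hDσ
  set s := sStar σ2 D αiid with hsdef
  have hs0 : 0 ≤ s := le_max_left _ _
  have ht0 : (0:ℝ) < 1 + 2*s := by linarith
  -- αsp > σ2
  have hαspσ : σ2 < αsp := by
    rcases eq_or_lt_of_le hαsp1 with heq | h
    · exfalso
      have h1 : (1:ℝ) - (σ2 + σ2 - 2*D)^2/(4*σ2*(σ2-D)) = D/σ2 := by
        field_simp
        ring
      have h2 : Rsp σ2 D σ2 = (1/2) * Real.log (σ2/D) := by
        rw [Rsp, h1, show D/σ2 = (σ2/D)⁻¹ by rw [inv_div], Real.log_inv]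
        ring
      rw [← heq, h2] at hRsp
      linarith
    · exact h
  by_contra hcon
  push_neg at hcon
  -- monotonicity of Riid in z
  have hmono : Riid σ2 D s αiid ≤ Riid σ2 D s αsp := by
    simp only [Riid]
    have h3 : s * αiid / ((1 + 2*s) * (σ2 - D)) ≤ s * αsp / ((1 + 2*s) * (σ2 - D)) :=
      (div_le_div_iff_of_pos_right (mul_pos ht0 hE)).2 (mul_le_mul_of_nonneg_left hcon hs0)
    linarith [h3]
  have hkey := key_ineq σ2 D hD hDσ s hs0 αsp hαspσ hαsp2
  rw [hRsp] at hkey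
  rw [hRiid] at hmono
  linarith
end
end

section
/- For every z with σ² < z < r₂², one has R_sp(z) > R_iid(s*(z), z). -/
noncomputable section

lemma two_mul_div_lt_log {A : ℝ} (hA : 1 < A) : 2*(A-1)/(A+1) < Real.log A := by
  have key : StrictMonoOn (fun x : ℝ => Real.log x - 2*(x-1)/(x+1)) (Set.Ici 1) := by
    apply strictMonoOn_of_deriv_pos (convex_Ici 1)
    · apply ContinuousOn.sub
      · refine Real.continuousOn_log.mono ?_
        intro x hx
        simp only [Set.mem_Ici] at hx
        simp only [Set.mem_compl_iff, Set.mem_singleton_iff]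
        intro h; rw [h] at hx; linarith
      · apply ContinuousOn.div
        · fun_prop
        · fun_prop
        · intro x hx; simp only [Set.mem_Ici] at hx; intro h; linarith
    · intro x hx
      rw [interior_Ici] at hx
      simp only [Set.mem_Ioi] at hx
      have hx0 : (0:ℝ) < x := by linarith
      have hx1 : x + 1 ≠ 0 := by linarith
      have h1 : HasDerivAt Real.log x⁻¹ x := Real.hasDerivAt_log (ne_of_gt hx0)
      have h2 : HasDerivAt (fun y : ℝ => 2*(y-1)/(y+1))
          ((2*(x+1) - 2*(x-1)*1)/(x+1)^2) x := by
        apply HasDerivAt.div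
        · have := (hasDerivAt_id x).sub_const 1
          simpa using this.const_mul 2
        · simpa using (hasDerivAt_id x).add_const 1
        · exact hx1
      have h3 : HasDerivAt (fun y : ℝ => Real.log y - 2*(y-1)/(y+1))
          (x⁻¹ - (2*(x+1) - 2*(x-1)*1)/(x+1)^2) x := h1.sub h2
      rw [h3.deriv]
      have hxp : (0:ℝ) < x*(x+1)^2 := by positivity
      rw [sub_pos, div_lt_iff₀ (by positivity), inv_eq_one_div, div_mul_eq_mul_div,
        lt_div_iff₀ hx0]
      nlinarith [sq_nonneg (x-1)]
  have h := key (Set.self_mem_Ici) (le_of_lt hA : (1:ℝ) ≤ A) hA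
  simp only [Real.log_one] at h
  norm_num at h
  linarith

lemma ratbound (a d t K u A : ℝ) (ha : 0 < a) (hd : 0 < d) (ht : 0 < t)
    (hK : 0 < K) (hKdef : K*d^2 = 4*a*d^3 - ((a+2*d+t)*t)^2)
    (hu : (u-1)*d = a + t) (hA : A = 4*a*(t+d)/K) :
    (u-1)*t/a ≤ 2*(A-1)/(A+1) := by
  have hS : (0:ℝ) < 4*a*(t+d) + K := by positivity
  have hX : (0:ℝ) < A + 1 := by rw [hA]; positivity
  have hA_sub : A - 1 = (4*a*(t+d)-K)/K := by rw [hA]; field_simp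
  have hA_add : A + 1 = (4*a*(t+d)+K)/K := by rw [hA]; field_simp
  have hrw : 2*(A-1)/(A+1) = 2*(4*a*(t+d)-K)/(4*a*(t+d)+K) := by
    rw [hA_sub, hA_add]; field_simp
  rw [hrw, div_le_div_iff₀ ha hS]
  -- polynomial core
  have hNK : (a+t)*t*((4*a*(t+d)+K)*d^2) ≤ 2*a*d*((4*a*(t+d)-K)*d^2) := by
    have e1 : (4*a*(t+d)+K)*d^2 = 4*a*(t+d)*d^2 + (4*a*d^3 - ((a+2*d+t)*t)^2) := by
      linear_combination hKdef
    have e2 : (4*a*(t+d)-K)*d^2 = 4*a*(t+d)*d^2 - (4*a*d^3 - ((a+2*d+t)*t)^2) := by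
      linear_combination -hKdef
    rw [e1, e2]
    have hid : 2*a*d*(4*a*(t+d)*d^2 - (4*a*d^3 - ((a+2*d+t)*t)^2))
        - (a+t)*t*(4*a*(t+d)*d^2 + (4*a*d^3 - ((a+2*d+t)*t)^2))
        = t^6 + 4*d*t^5 + 4*d^2*t^4 + 3*a*t^5 + 10*a*d*t^4 + 8*a*d^2*t^3
          + 3*a^2*t^4 + 8*a^2*d*t^3 + 4*a^2*d^2*t^2 + a^3*t^3 + 2*a^3*d*t^2 := by
      ring
    have hpos : (0:ℝ) ≤ t^6 + 4*d*t^5 + 4*d^2*t^4 + 3*a*t^5 + 10*a*d*t^4 + 8*a*d^2*t^3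
          + 3*a^2*t^4 + 8*a^2*d*t^3 + 4*a^2*d^2*t^2 + a^3*t^3 + 2*a^3*d*t^2 := by positivity
    linarith [hid, hpos]
  have l1 : (u-1)*t*(4*a*(t+d)+K)*d^3 = (a+t)*t*((4*a*(t+d)+K)*d^2) := by
    linear_combination (t*(4*a*(t+d)+K)*d^2)*hu
  have l2 : 2*a*d*((4*a*(t+d)-K)*d^2) = 2*(4*a*(t+d)-K)*a*d^3 := by ring
  have l3 : (u-1)*t*(4*a*(t+d)+K)*d^3 ≤ 2*(4*a*(t+d)-K)*a*d^3 := by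
    rw [l1, ← l2]; exact hNK
  have hd3 : (0:ℝ) < d^3 := by positivity
  exact le_of_mul_le_mul_right l3 hd3

set_option maxHeartbeats 1000000 in
/-- For every `z` with `σ² < z < r₂²` where `r₂ = √(σ²-D) + √D`, one has
`R_sp(z) > R_iid(s*(z), z)`. -/
theorem Rsp_gt_Riid (σ2 D : ℝ) (hD : 0 < D) (hDσ : D < σ2)
    (z : ℝ) (hz1 : σ2 < z) (hz2 : z < (Real.sqrt (σ2 - D) + Real.sqrt D) ^ 2) :
    Riid σ2 D (sStar σ2 D z) z < Rsp σ2 D z := by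
  have ha : 0 < σ2 - D := by linarith
  have hz0 : 0 < z := by linarith
  have hqarg : (0:ℝ) ≤ (σ2 - D)^2 + 4*z*D := by positivity
  obtain ⟨q, hq_def⟩ : ∃ q, q = Real.sqrt ((σ2 - D) ^ 2 + 4 * z * D) := ⟨_, rfl⟩
  have hq2 : q^2 = (σ2-D)^2 + 4*z*D := by rw [hq_def]; exact Real.sq_sqrt hqarg
  have hq0 : 0 ≤ q := hq_def ▸ Real.sqrt_nonneg _
  have hq : σ2 + D < q := by
    have h1 : (σ2+D)^2 < q^2 := by rw [hq2]; nlinarith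
    exact lt_of_pow_lt_pow_left₀ 2 hq0 h1
  obtain ⟨t, ht_def⟩ : ∃ t, t = (q - σ2 - D)/2 := ⟨_, rfl⟩
  have ht0 : 0 < t := by rw [ht_def]; linarith
  obtain ⟨u, hu_def⟩ : ∃ u, u = (σ2 - D + q)/(2*D) := ⟨_, rfl⟩
  have hDne : (2*D) ≠ 0 := by positivity
  have hDu : D*u = σ2 + t := by rw [hu_def, ht_def]; field_simp; ring
  have hu1 : 1 < u := by rw [hu_def, lt_div_iff₀ (by linarith : (0:ℝ) < 2*D)]; linarith
  have hu0 : 0 < u := by linarith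
  have hs : sStar σ2 D z = (u-1)/2 := by
    rw [sStar, ← hq_def, max_eq_right]
    · rw [hu_def]; field_simp; ring
    · apply div_nonneg _ (by linarith : (0:ℝ) ≤ 4*D); linarith
  have h1s : 1 + 2 * sStar σ2 D z = u := by rw [hs]; ring
  have hz_ut : z = u*(t+D) := by
    rw [hu_def, ht_def]; field_simp; linear_combination (-1)*hq2
  have hw : z - σ2 = (u+1)*t := by linear_combination hz_ut + hDu
  -- positivity of K
  have hsqrt : (Real.sqrt (σ2 - D) + Real.sqrt D)^2 = σ2 + 2*Real.sqrt ((σ2-D)*D) := by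
    rw [add_sq, Real.sq_sqrt (le_of_lt ha), Real.sq_sqrt (le_of_lt hD),
      Real.sqrt_mul (le_of_lt ha) D]
    ring
  have hw2 : (z - σ2)^2 < 4*(σ2-D)*D := by
    have h1 : z - σ2 < 2*Real.sqrt ((σ2-D)*D) := by rw [hsqrt] at hz2; linarith
    have h2 : 0 < z - σ2 := by linarith
    have h3 : (2*Real.sqrt ((σ2-D)*D))^2 = 4*((σ2-D)*D) := by
      rw [mul_pow, Real.sq_sqrt (by positivity : (0:ℝ) ≤ (σ2-D)*D)]; ring
    nlinarith
  obtain ⟨K, hK_def⟩ : ∃ K, K = 4*(σ2-D)*D - (z-σ2)^2 := ⟨_, rfl⟩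
  have hK : 0 < K := by rw [hK_def]; linarith
  have hN : 0 < 4*z*(σ2-D) := by positivity
  -- Rsp rewrite
  have hXeq : 1 - (z + σ2 - 2*D)^2/(4*z*(σ2-D)) = K/(4*z*(σ2-D)) := by
    rw [hK_def]; field_simp; ring
  have hRsp : Rsp σ2 D z = (1/2)*(Real.log (4*z*(σ2-D)) - Real.log K) := by
    rw [Rsp, hXeq, Real.log_div (ne_of_gt hK) (ne_of_gt hN)]
    ring
  -- Riid rewrite
  have hRiid : Riid σ2 D (sStar σ2 D z) z
      = (1/2)*Real.log u + (u-1)*t/(2*(σ2-D)) := by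
    rw [Riid, h1s, hs, hz_ut]
    field_simp
    ring
  -- split the log
  obtain ⟨A, hA_def⟩ : ∃ A, A = (4*z*(σ2-D))/(u*K) := ⟨_, rfl⟩
  have hA_pos : 0 < A := by rw [hA_def]; positivity
  have hANK : Real.log (4*z*(σ2-D)) - Real.log K = Real.log A + Real.log u := by
    have e : (4*z*(σ2-D))/K = A*u := by rw [hA_def]; field_simp
    calc Real.log (4*z*(σ2-D)) - Real.log K
        = Real.log ((4*z*(σ2-D))/K) := (Real.log_div (ne_of_gt hN) (ne_of_gt hK)).symm
      _ = Real.log (A*u) := by rw [e]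
      _ = Real.log A + Real.log u := Real.log_mul (ne_of_gt hA_pos) (ne_of_gt hu0)
  have hA_eq : A = 4*(σ2-D)*(t+D)/K := by
    rw [hA_def, hz_ut]; field_simp
  have hA1 : 1 < A := by
    rw [hA_eq, lt_div_iff₀ hK, hK_def]
    have hstep : 4*(σ2-D)*(t+D) - 1*(4*(σ2-D)*D - (z-σ2)^2)
        = 4*((σ2-D)*t) + (z-σ2)^2 := by ring
    linarith [mul_pos ha ht0, sq_nonneg (z-σ2), hstep]
  -- key inequalities
  have hu' : (u-1)*D = (σ2-D) + t := by linear_combination hDu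
  have h5 : (z-σ2)*D = ((σ2-D)+2*D+t)*t := by rw [hw]; linear_combination t*hDu
  have hKdef : K*D^2 = 4*(σ2-D)*D^3 - (((σ2-D)+2*D+t)*t)^2 := by
    rw [hK_def]; linear_combination (-(z-σ2)*D - ((σ2-D)+2*D+t)*t) * h5
  have hA_eq' : A = 4*(σ2-D)*(t+D)/K := hA_eq
  have hrat := ratbound (σ2-D) D t K u A ha hD ht0 hK hKdef hu' hA_eq'
  have hlog := two_mul_div_lt_log hA1
  rw [hRiid, hRsp, hANK]
  have hhalf : (u-1)*t/(2*(σ2-D)) = (1/2)*((u-1)*t/(σ2-D)) := by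
    field_simp
  rw [hhalf]
  linarith
end
end

section
/- The function R_sp is strictly increasing on the set { z ∈ ℝ : z > 0 and |σ² − 2D| ≤ z < r₂² }; that is, for z₁ < z₂ in this set, R_sp(z₁) < R_sp(z₂). -/
noncomputable section

/-- `R_sp` is strictly increasing on `{z : 0 < z ∧ |σ² - 2D| ≤ z < r₂²}`, where
`r₂ = √(σ²-D) + √D`. -/
theorem Rsp_strictMonoOn (σ2 D : ℝ) (hD : 0 < D) (hDσ : D < σ2) :
    StrictMonoOn (Rsp σ2 D)
      {z : ℝ | 0 < z ∧ |σ2 - 2 * D| ≤ z ∧ z < (Real.sqrt (σ2 - D) + Real.sqrt D) ^ 2} := by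
  intro z₁ hz₁ z₂ hz₂ h12
  obtain ⟨h1pos, h1abs, h1lt⟩ := hz₁
  obtain ⟨h2pos, h2abs, h2lt⟩ := hz₂
  set s := Real.sqrt (σ2 - D) with hs_def
  set t := Real.sqrt D with ht_def
  have hc : 0 < σ2 - D := by linarith
  have hs : 0 < s := Real.sqrt_pos.2 hc
  have ht : 0 < t := Real.sqrt_pos.2 hD
  have hs2 : s ^ 2 = σ2 - D := Real.sq_sqrt hc.le
  have ht2 : t ^ 2 = D := Real.sq_sqrt hD.le
  have ha : σ2 - 2 * D = s ^ 2 - t ^ 2 := by rw [hs2, ht2]; ring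
  -- |a| = |s - t| * (s + t)
  have habs : |σ2 - 2 * D| = |s - t| * (s + t) := by
    rw [ha, show s ^ 2 - t ^ 2 = (s - t) * (s + t) by ring, abs_mul,
      abs_of_pos (by linarith : (0:ℝ) < s + t)]
  have habs_le : |s - t| ≤ s + t := abs_le.2 ⟨by linarith, by linarith⟩
  have hB1 : (s - t) ^ 2 ≤ z₁ := by
    have h := mul_le_mul_of_nonneg_left habs_le (abs_nonneg (s - t))
    calc (s - t) ^ 2 = |s - t| * |s - t| := by rw [← sq_abs, sq]
    _ ≤ |s - t| * (s + t) := h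
    _ = |σ2 - 2 * D| := habs.symm
    _ ≤ z₁ := h1abs
  have hB2 : (s - t) ^ 2 < z₂ := lt_of_le_of_lt hB1 h12
  -- key : a² < z₁ z₂
  have hkey : (σ2 - 2 * D) ^ 2 < z₁ * z₂ := by
    have h1 : (σ2 - 2 * D) ^ 2 ≤ z₁ ^ 2 := by
      rw [← sq_abs (σ2 - 2 * D)]
      exact pow_le_pow_left₀ (abs_nonneg _) h1abs 2
    nlinarith
  have hden1 : 0 < 4 * z₁ * (σ2 - D) := by positivity
  have hden2 : 0 < 4 * z₂ * (σ2 - D) := by positivity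
  -- E z₁ < E z₂
  have hElt : (z₁ + σ2 - 2 * D) ^ 2 / (4 * z₁ * (σ2 - D)) <
      (z₂ + σ2 - 2 * D) ^ 2 / (4 * z₂ * (σ2 - D)) := by
    rw [div_lt_div_iff₀ hden1 hden2]
    nlinarith [mul_pos hc (mul_pos (sub_pos.2 h12) (sub_pos.2 hkey))]
  -- E z₂ < 1
  have hE2 : (z₂ + σ2 - 2 * D) ^ 2 / (4 * z₂ * (σ2 - D)) < 1 := by
    rw [div_lt_one hden2]
    nlinarith [mul_pos (sub_pos.2 h2lt) (sub_pos.2 hB2)]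
  have hlog : Real.log (1 - (z₂ + σ2 - 2 * D) ^ 2 / (4 * z₂ * (σ2 - D))) <
      Real.log (1 - (z₁ + σ2 - 2 * D) ^ 2 / (4 * z₁ * (σ2 - D))) :=
    Real.log_lt_log (by linarith) (by linarith)
  unfold Rsp
  linarith
end
end
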